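/- arXiv:1008.1212 — 5 statements merged into one kernel-verified Lean document; each statement's English description precedes it below -/
import Mathlib

section
/- Let A be a unital associative algebra over ℂ. Consider the short exact sequence of cochain complexes 0 → (C_λ^*(A), b) → (C^*(A), b) → (C^*(A)/C_λ^*(A), b) → 0 given by the inclusion of the cyclic complex into the Hochschild complex. Then the connecting homomorphism δ : HC^{n−1}(A) → H^n(C/C_λ) of the associated long exact sequence is an isomorphism for every n ≥ 1. -/
/-!
The complex `(C^*, b')` is contractible: `s θ = θ(1, ·)` satisfies `b' s + s b' = 1`. Writing the
Hochschild faces as `δ₀, …, δₙ₊₁` (the last one cyclic), the cyclic operator satisfies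
`λ δᵢ₊₁ = δᵢ λ` and `λⁿ⁺¹ = 1`; from these relations alone one gets `(1 - λ) b = b' (1 - λ)`,
`b N = N b'` and `N (1 - λ) = (1 - λ) N = 0` for `N = ∑ λᵏ`.

Given a cocycle `χ'` of `C/C_λ`, the cochain `(1 - λ) χ'` is a `b'`-cocycle, hence equals `b' ψ`
with `ψ = s (1 - λ) χ'`, and `φ = N ψ` is a cyclic cocycle with `δ[φ] = [χ']`. Conversely, if
`δ[φ] = 0` then `ψ - (1 - λ) η` is a `b'`-cocycle for some `η`, hence zero in degree `0` and
`b' ξ₀` with `ξ₀ = s (ψ - (1 - λ) η)` above; so `φ = N (ψ - (1 - λ) η)` is `0`, resp. `b (N ξ₀)`.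
-/

noncomputable section
namespace NCG

abbrev Cochain (A : Type) (n : ℕ) : Type := (Fin (n + 1) → A) → ℂ

variable {A : Type} [Ring A] [Algebra ℂ A]

def face {n : ℕ} (a : Fin (n + 2) → A) (i : Fin (n + 1)) : Fin (n + 1) → A :=
  fun j => if j < i then a j.castSucc else if j = i then a j.castSucc * a j.succ else a j.succ

def cyclicFace {n : ℕ} (a : Fin (n + 2) → A) : Fin (n + 1) → A :=
  fun j => if j = 0 then a (Fin.last (n + 1)) * a 0 else a j.castSucc

def bP {n : ℕ} (φ : Cochain A n) : Cochain A (n + 1) :=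
  fun a => ∑ i : Fin (n + 1), (-1 : ℂ) ^ (i : ℕ) * φ (face a i)

def bH {n : ℕ} (φ : Cochain A n) : Cochain A (n + 1) :=
  fun a => bP φ a + (-1 : ℂ) ^ (n + 1) * φ (cyclicFace a)

def lam {n : ℕ} (φ : Cochain A n) : Cochain A n :=
  fun a => (-1 : ℂ) ^ n * φ (fun j => a (j - 1))

def opN {n : ℕ} (φ : Cochain A n) : Cochain A n :=
  fun a => ∑ k ∈ Finset.range (n + 1), (lam^[k] φ) a

def opS {n : ℕ} (φ : Cochain A (n + 1)) : Cochain A n :=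
  fun a => (-1 : ℂ) ^ n * φ (Fin.snoc a 1)

def opB0 {n : ℕ} (φ : Cochain A (n + 1)) : Cochain A n :=
  fun a => φ (Fin.cons 1 a) - (-1 : ℂ) ^ (n + 1) * φ (Fin.snoc a 1)

def opB {n : ℕ} (φ : Cochain A (n + 1)) : Cochain A n := opN (opB0 φ)

def IsML {n : ℕ} (φ : Cochain A n) : Prop :=
  ∃ F : MultilinearMap ℂ (fun _ : Fin (n + 1) => A) ℂ, ⇑F = φ

end NCG

open Finset

theorem pow_mul_geom_sum_of_pow_eq_one {α : Type*} [Ring α] {x : α} {m : ℕ} (hx : x ^ m = 1)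
    (i : ℕ) : x ^ i * ∑ k ∈ range m, x ^ k = ∑ k ∈ range m, x ^ k := by
  have hx1 : x * ∑ k ∈ range m, x ^ k = ∑ k ∈ range m, x ^ k := by
    have h := mul_neg_geom_sum x m
    rwa [hx, sub_self, sub_mul, one_mul, sub_eq_zero, eq_comm] at h
  induction i with
  | zero => rw [pow_zero, one_mul]
  | succ i ih => rw [pow_succ, mul_assoc, hx1, ih]

theorem geom_sum_mul_pow_of_pow_eq_one {α : Type*} [Ring α] {x : α} {m : ℕ} (hx : x ^ m = 1)
    (i : ℕ) : (∑ k ∈ range m, x ^ k) * x ^ i = ∑ k ∈ range m, x ^ k := by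
  rw [← (Commute.sum_right _ _ _ fun k _ => Commute.pow_pow_self x i k).eq,
    pow_mul_geom_sum_of_pow_eq_one hx]

namespace LinearMap

variable {R M M' M'' : Type*} [Semiring R] [AddCommGroup M] [AddCommGroup M'] [AddCommGroup M'']
  [Module R M] [Module R M'] [Module R M'']

theorem finset_sum_comp {ι : Type*} (s : Finset ι) (f : ι → M' →ₗ[R] M'') (g : M →ₗ[R] M') :
    (∑ i ∈ s, f i) ∘ₗ g = ∑ i ∈ s, f i ∘ₗ g := by
  ext; simp [LinearMap.sum_apply]

theorem comp_finset_sum {ι : Type*} (s : Finset ι) (f : ι → M →ₗ[R] M') (g : M' →ₗ[R] M'') :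
    g ∘ₗ (∑ i ∈ s, f i) = ∑ i ∈ s, g ∘ₗ f i := by
  ext; simp [LinearMap.sum_apply]

end LinearMap

section CyclicRelations

variable {R M M' : Type*} [Semiring R] [AddCommGroup M] [AddCommGroup M'] [Module R M]
  [Module R M'] {n : ℕ} {t : Module.End R M} {t' : Module.End R M'} {e : ℕ → M →ₗ[R] M'}

theorem pow_comp_eq_comp_pow (he : ∀ i ≤ n, t' ∘ₗ e (i + 1) = e i ∘ₗ t) :
    ∀ i ≤ n + 1, (t' ^ i) ∘ₗ e i = e 0 ∘ₗ t ^ i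
  | 0, _ => by simp [Module.End.one_eq_id]
  | i + 1, hi => by
    rw [pow_succ, Module.End.mul_eq_comp, LinearMap.comp_assoc, he i (by omega),
      ← LinearMap.comp_assoc, pow_comp_eq_comp_pow he i (by omega), LinearMap.comp_assoc,
      ← Module.End.mul_eq_comp, ← pow_succ]

theorem comp_zero_eq_last (ht : t ^ (n + 1) = 1) (ht' : t' ^ (n + 2) = 1)
    (he : ∀ i ≤ n, t' ∘ₗ e (i + 1) = e i ∘ₗ t) : t' ∘ₗ e 0 = e (n + 1) := by
  calc t' ∘ₗ e 0 = t' ∘ₗ (e 0 ∘ₗ t ^ (n + 1)) := by simp [ht, Module.End.one_eq_id]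
    _ = (t' ^ (n + 2)) ∘ₗ e (n + 1) := by
      rw [← pow_comp_eq_comp_pow he (n + 1) le_rfl, ← LinearMap.comp_assoc,
        ← Module.End.mul_eq_comp, ← pow_succ']
    _ = e (n + 1) := by simp [ht', Module.End.one_eq_id]

theorem sum_sub_comp_sum (ht : t ^ (n + 1) = 1) (ht' : t' ^ (n + 2) = 1)
    (he : ∀ i ≤ n, t' ∘ₗ e (i + 1) = e i ∘ₗ t) :
    (∑ i ∈ range (n + 2), e i) - t' ∘ₗ ∑ i ∈ range (n + 2), e i =
      (∑ i ∈ range (n + 1), e i) - (∑ i ∈ range (n + 1), e i) ∘ₗ t := by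
  have hshift : t' ∘ₗ ∑ i ∈ range (n + 2), e i = e (n + 1) + (∑ i ∈ range (n + 1), e i) ∘ₗ t := by
    rw [LinearMap.comp_finset_sum, sum_range_succ', comp_zero_eq_last ht ht' he,
      LinearMap.finset_sum_comp, add_comm]
    congr 1
    exact sum_congr rfl fun i hi => he i (by simpa [Nat.lt_succ_iff] using hi)
  rw [hshift, sum_range_succ]
  abel

theorem sum_comp_geom_sum (ht : t ^ (n + 1) = 1) (ht' : t' ^ (n + 2) = 1)
    (he : ∀ i ≤ n, t' ∘ₗ e (i + 1) = e i ∘ₗ t) :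
    (∑ i ∈ range (n + 2), e i) ∘ₗ ∑ k ∈ range (n + 1), t ^ k =
      (∑ k ∈ range (n + 2), t' ^ k) ∘ₗ ∑ i ∈ range (n + 1), e i := by
  set N := ∑ k ∈ range (n + 1), t ^ k
  set N' := ∑ k ∈ range (n + 2), t' ^ k
  -- both sides equal `N' ∘ₗ e 0 ∘ₗ N`, since `e i = t' ^ (n + 2 - i) ∘ₗ e 0 ∘ₗ t ^ i`
  have hconj : ∀ i ≤ n + 1, ∀ X : Module.End R M,
      (t' ^ i) ∘ₗ (e i ∘ₗ X) = e 0 ∘ₗ ((t ^ i) ∘ₗ X) := fun i hi X => by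
    rw [← LinearMap.comp_assoc, pow_comp_eq_comp_pow he i hi, LinearMap.comp_assoc]
  have hleft : ∀ i ∈ range (n + 2), e i ∘ₗ N = (t' ^ (n + 2 - i)) ∘ₗ (e 0 ∘ₗ N) := fun i hi => by
    have hi : i ≤ n + 1 := Nat.lt_succ_iff.mp (mem_range.mp hi)
    calc e i ∘ₗ N = (t' ^ (n + 2 - i) * t' ^ i) ∘ₗ (e i ∘ₗ N) := by
          rw [← pow_add, Nat.sub_add_cancel (by omega), ht', Module.End.one_eq_id,
            LinearMap.id_comp]
      _ = (t' ^ (n + 2 - i)) ∘ₗ (e 0 ∘ₗ (t ^ i * N)) := by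
          rw [Module.End.mul_eq_comp, LinearMap.comp_assoc, hconj i hi N, Module.End.mul_eq_comp]
      _ = (t' ^ (n + 2 - i)) ∘ₗ (e 0 ∘ₗ N) := by rw [pow_mul_geom_sum_of_pow_eq_one ht]
  have hright : ∀ i ∈ range (n + 1), N' ∘ₗ e i = N' ∘ₗ (e 0 ∘ₗ t ^ i) := fun i hi => by
    have hi : i ≤ n + 1 := by have := mem_range.mp hi; omega
    calc N' ∘ₗ e i = (N' * t' ^ i) ∘ₗ e i := by rw [geom_sum_mul_pow_of_pow_eq_one ht' i]
      _ = N' ∘ₗ (e 0 ∘ₗ t ^ i) := by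
        rw [Module.End.mul_eq_comp, LinearMap.comp_assoc, pow_comp_eq_comp_pow he i hi]
  have hreflect : ∑ i ∈ range (n + 2), t' ^ (n + 2 - i) = N' := by
    calc ∑ i ∈ range (n + 2), t' ^ (n + 2 - i)
        = ∑ i ∈ range (n + 2), t' ^ (n + 2 - 1 - i + 1) :=
          sum_congr rfl fun i hi => by rw [show n + 2 - 1 - i + 1 = n + 2 - i by
            have := mem_range.mp hi; omega]
      _ = t' * N' := by rw [sum_range_reflect (fun j => t' ^ (j + 1)), mul_sum]; simp [pow_succ']
      _ = N' := by simpa using pow_mul_geom_sum_of_pow_eq_one ht' 1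
  calc (∑ i ∈ range (n + 2), e i) ∘ₗ N = N' ∘ₗ (e 0 ∘ₗ N) := by
        rw [LinearMap.finset_sum_comp, sum_congr rfl hleft, ← LinearMap.finset_sum_comp, hreflect]
    _ = N' ∘ₗ ∑ i ∈ range (n + 1), e i := by
        rw [LinearMap.comp_finset_sum _ _ N', sum_congr rfl hright, ← LinearMap.comp_finset_sum,
          ← LinearMap.comp_finset_sum]

end CyclicRelations

theorem Fin.val_sub_one_eq_ite {m : ℕ} (x : Fin (m + 1)) :
    ((x - 1 : Fin (m + 1)) : ℕ) = if (x : ℕ) = 0 then m else x - 1 := by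
  rw [Fin.coe_sub_one]; simp only [Fin.ext_iff, Fin.val_zero]

namespace NCG

variable {A : Type} {n : ℕ}

def lamₗ : Module.End ℂ (Cochain A n) where
  toFun := lam
  map_add' φ ψ := by funext a; simp only [lam, Pi.add_apply, mul_add]
  map_smul' c φ := by funext a; simp only [lam, Pi.smul_apply, smul_eq_mul, RingHom.id_apply]; ring

@[simp]
theorem lamₗ_apply (φ : Cochain A n) : lamₗ φ = lam φ := rfl

theorem lam_zero : lam (0 : Cochain A n) = 0 := map_zero lamₗ

open Fin.NatCast in
theorem lamₗ_pow_apply (k : ℕ) (φ : Cochain A n) (a : Fin (n + 1) → A) :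
    (lamₗ ^ k) φ a = (-1) ^ (n * k) * φ (fun j => a (j - k)) := by
  induction k generalizing a with
  | zero => simp
  | succ k ih =>
    rw [pow_succ', Module.End.mul_apply]
    change (-1) ^ n * (lamₗ ^ k) φ (fun j => a (j - 1)) = _
    rw [ih]
    simp only [Nat.cast_succ, sub_sub, Nat.mul_succ, pow_add]
    ring

theorem lamₗ_pow_succ_self : (lamₗ : Module.End ℂ (Cochain A n)) ^ (n + 1) = 1 := by
  ext φ a
  rw [lamₗ_pow_apply, (Nat.even_mul_succ_self n).neg_one_pow, Fin.natCast_self]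
  simp

theorem opN_eq_sum_pow (φ : Cochain A n) : opN φ = (∑ k ∈ range (n + 1), lamₗ ^ k) φ := by
  funext a
  simp only [opN, LinearMap.sum_apply, Finset.sum_apply, Module.End.pow_apply]
  rfl

theorem opN_zero : opN (0 : Cochain A n) = 0 := by rw [opN_eq_sum_pow, map_zero]

theorem lam_opN (φ : Cochain A n) : lam (opN φ) = opN φ := by
  rw [opN_eq_sum_pow, show ∀ ψ, lam ψ = (lamₗ ^ 1) ψ from fun _ => rfl, ← Module.End.mul_apply,
    pow_mul_geom_sum_of_pow_eq_one lamₗ_pow_succ_self]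

theorem opN_lam (φ : Cochain A n) : opN (lam φ) = opN φ := by
  rw [opN_eq_sum_pow, opN_eq_sum_pow, show lam φ = (lamₗ ^ 1) φ from rfl,
    ← Module.End.mul_apply, geom_sum_mul_pow_of_pow_eq_one lamₗ_pow_succ_self]

theorem opN_sub (φ ψ : Cochain A n) : opN (φ - ψ) = opN φ - opN ψ := by
  simp only [opN_eq_sum_pow, map_sub]

theorem opN_sub_sub_lam (ψ η : Cochain A n) : opN (ψ - (η - lam η)) = opN ψ := by
  rw [opN_sub, opN_sub, opN_lam, sub_self, sub_zero]

section Ring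

variable [Ring A]

def hochFace (a : Fin (n + 2) → A) (i : ℕ) : Fin (n + 1) → A :=
  if h : i < n + 1 then face a ⟨i, h⟩ else cyclicFace a

theorem hochFace_of_lt (a : Fin (n + 2) → A) (i : Fin (n + 1)) : hochFace a i = face a i := by
  simp [hochFace, i.isLt]

theorem hochFace_last (a : Fin (n + 2) → A) : hochFace a (n + 1) = cyclicFace a := by
  simp [hochFace]

theorem hochFace_rotate (a : Fin (n + 2) → A) {i : ℕ} (hi : i ≤ n) :
    hochFace (fun j => a (j - 1)) (i + 1) = fun j => hochFace a i (j - 1) := by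
  funext j
  unfold hochFace
  rw [dif_pos (by omega : i < n + 1)]
  split_ifs
  all_goals
    simp only [face, cyclicFace, Fin.lt_def, Fin.ext_iff, Fin.val_sub_one_eq_ite, Fin.val_zero]
    split_ifs
  all_goals first
    | (exfalso; omega)
    | (congr 1 <;> try congr 1) <;> ext <;>
        simp only [Fin.val_sub_one_eq_ite, Fin.val_castSucc, Fin.val_succ, Fin.val_last,
          Fin.val_zero] <;>
        split_ifs <;> first | omega | contradiction

def coface (i : ℕ) : Cochain A n →ₗ[ℂ] Cochain A (n + 1) where
  toFun φ a := (-1) ^ i * φ (hochFace a i)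
  map_add' φ ψ := by funext a; simp only [Pi.add_apply, mul_add]
  map_smul' c φ := by funext a; simp only [Pi.smul_apply, smul_eq_mul, RingHom.id_apply]; ring

theorem bP_eq_sum_coface (φ : Cochain A n) : bP φ = (∑ i ∈ range (n + 1), coface i) φ := by
  funext a
  rw [LinearMap.sum_apply, Finset.sum_apply, bP,
    ← Fin.sum_univ_eq_sum_range (fun i => coface i φ a)]
  simp only [coface, LinearMap.coe_mk, AddHom.coe_mk, hochFace_of_lt]

theorem bH_eq_sum_coface (φ : Cochain A n) : bH φ = (∑ i ∈ range (n + 2), coface i) φ := by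
  funext a
  rw [sum_range_succ, LinearMap.add_apply, ← bP_eq_sum_coface, Pi.add_apply]
  simp only [bH, coface, LinearMap.coe_mk, AddHom.coe_mk, hochFace_last]

theorem bH_zero : bH (0 : Cochain A n) = 0 := by rw [bH_eq_sum_coface, map_zero]

theorem lamₗ_comp_coface {i : ℕ} (hi : i ≤ n) :
    lamₗ ∘ₗ coface (A := A) (n := n) (i + 1) = coface i ∘ₗ lamₗ := by
  ext φ a
  change (-1) ^ (n + 1) * ((-1) ^ (i + 1) * φ (hochFace (fun j => a (j - 1)) (i + 1))) =
    (-1) ^ i * ((-1) ^ n * φ (fun j => hochFace a i (j - 1)))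
  rw [hochFace_rotate a hi]
  ring

theorem bP_sub (φ ψ : Cochain A n) : bP (φ - ψ) = bP φ - bP ψ := by
  simp only [bP_eq_sum_coface, map_sub]

theorem bH_sub_lam_bH (φ : Cochain A n) : bH φ - lam (bH φ) = bP (φ - lam φ) := by
  have h := LinearMap.congr_fun (sum_sub_comp_sum lamₗ_pow_succ_self lamₗ_pow_succ_self
    fun i hi => lamₗ_comp_coface (n := n) hi) φ
  simpa only [LinearMap.sub_apply, LinearMap.comp_apply, ← bH_eq_sum_coface, ← bP_eq_sum_coface,
    lamₗ_apply, bP_sub] using h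

theorem bH_opN (ψ : Cochain A n) : bH (opN ψ) = opN (bP ψ) := by
  rw [opN_eq_sum_pow, bH_eq_sum_coface, bP_eq_sum_coface, opN_eq_sum_pow]
  exact LinearMap.congr_fun (sum_comp_geom_sum lamₗ_pow_succ_self lamₗ_pow_succ_self
    fun i hi => lamₗ_comp_coface hi) ψ

section Contraction

variable {m : ℕ}

def contraction (θ : Cochain A (m + 1)) : Cochain A m := fun a => θ (Fin.cons 1 a)

theorem contraction_zero : contraction (0 : Cochain A (m + 1)) = 0 := rfl

theorem face_cons_one_zero (a : Fin (m + 1) → A) : face (Fin.cons 1 a : Fin (m + 2) → A) 0 = a := by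
  funext j
  refine Fin.cases ?_ (fun j => ?_) j <;> simp [face, Fin.succ_ne_zero]

theorem face_cons_succ (x : A) (a : Fin (m + 2) → A) (i : Fin (m + 1)) :
    face (Fin.cons x a) i.succ = Fin.cons x (face a i) := by
  funext j
  refine Fin.cases ?_ (fun j => ?_) j
  · simp [face, Fin.succ_pos]
  · simp only [face, Fin.cons_succ, ← Fin.succ_castSucc, Fin.succ_lt_succ_iff, Fin.succ_inj]

theorem bP_contraction_add_contraction_bP (θ : Cochain A (m + 1)) :
    bP (contraction θ) + contraction (bP θ) = θ := by
  funext a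
  simp only [Pi.add_apply, contraction, bP, Fin.sum_univ_succ (n := m + 1), face_cons_one_zero,
    face_cons_succ, Fin.val_zero, Fin.val_succ, pow_zero, one_mul, pow_succ, mul_neg_one,
    neg_mul, sum_neg_distrib]
  ring

theorem bP_contraction_of_bP_eq_zero {θ : Cochain A (m + 1)} (h : bP θ = 0) :
    bP (contraction θ) = θ := by
  have hs := bP_contraction_add_contraction_bP θ
  rwa [h, contraction_zero, add_zero] at hs

theorem contraction_bP_of_zero (f : Cochain A 0) : contraction (bP f) = f := by
  funext a
  simp [contraction, bP, face_cons_one_zero]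

end Contraction

theorem bP_sub_sub_lam_eq_zero {ψ η : Cochain A n} {χ : Cochain A (n + 1)}
    (hχ : χ - lam χ = bP ψ) (hη : lam (χ - bH η) = χ - bH η) :
    bP (ψ - (η - lam η)) = 0 := by
  calc bP (ψ - (η - lam η)) = (χ - lam χ) - (bH η - lam (bH η)) := by
        rw [bP_sub, hχ, bH_sub_lam_bH]
    _ = (χ - bH η) - lam (χ - bH η) := by
        simp only [← lamₗ_apply, map_sub]; abel
    _ = 0 := by rw [hη, sub_self]

theorem bH_opN_contraction {θ : Cochain A (n + 1)} (h : bP θ = 0) :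
    bH (opN (contraction θ)) = opN θ := by
  rw [bH_opN, bP_contraction_of_bP_eq_zero h]

end Ring

section Multilinear

variable [Ring A] [Algebra ℂ A]

theorem IsML.zero : IsML (0 : Cochain A n) := ⟨0, rfl⟩

theorem IsML.add {φ ψ : Cochain A n} (hφ : IsML φ) (hψ : IsML ψ) : IsML (φ + ψ) := by
  obtain ⟨F, rfl⟩ := hφ
  obtain ⟨G, rfl⟩ := hψ
  exact ⟨F + G, rfl⟩

theorem IsML.sub {φ ψ : Cochain A n} (hφ : IsML φ) (hψ : IsML ψ) : IsML (φ - ψ) := by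
  obtain ⟨F, rfl⟩ := hφ
  obtain ⟨G, rfl⟩ := hψ
  exact ⟨F - G, rfl⟩

theorem IsML.lam {φ : Cochain A n} (hφ : IsML φ) : IsML (lam φ) := by
  obtain ⟨F, rfl⟩ := hφ
  refine ⟨((-1 : ℂ) ^ n) • F.domDomCongr (Equiv.subRight 1), ?_⟩
  funext a
  simp [NCG.lam]

theorem IsML.lamₗ_pow {φ : Cochain A n} (hφ : IsML φ) (k : ℕ) : IsML ((lamₗ ^ k) φ) := by
  induction k with
  | zero => exact hφ
  | succ k ih => rw [pow_succ', Module.End.mul_apply, lamₗ_apply]; exact ih.lam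

theorem IsML.opN {φ : Cochain A n} (hφ : IsML φ) : IsML (opN φ) := by
  rw [opN_eq_sum_pow, LinearMap.sum_apply]
  exact sum_induction _ IsML (fun _ _ => IsML.add) IsML.zero fun k _ => hφ.lamₗ_pow k

theorem IsML.contraction {θ : Cochain A (n + 1)} (hθ : IsML θ) : IsML (contraction θ) := by
  obtain ⟨F, rfl⟩ := hθ
  exact ⟨F.curryLeft 1, rfl⟩

end Multilinear

/-- Stated elementwise, with source degree `n` and target degree `n + 1`: for a cyclic cocycle `φ`,
choose `ψ` with `Nψ = φ` and `χ` with `(1 - λ)χ = b'ψ`; then `δ[φ] = [χ]` in `Hⁿ⁺¹(C/C_λ)`. -/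
theorem connecting_hom_cyclic_to_quotient_is_iso (A : Type) [Ring A] [Algebra ℂ A] :
    -- surjectivity: every cocycle class of `C/C_λ` is `δ` of a cyclic cocycle class
    (∀ (n : ℕ) (χ' : Cochain A (n + 1)), IsML χ' → lam (bH χ') = bH χ' →
      ∃ (φ ψ η : Cochain A n) (χ : Cochain A (n + 1)),
        IsML φ ∧ IsML ψ ∧ IsML η ∧ IsML χ ∧
        lam φ = φ ∧ bH φ = 0 ∧ opN ψ = φ ∧ χ - lam χ = bP ψ ∧
        lam (χ' - χ - bH η) = χ' - χ - bH η) ∧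
    -- injectivity, source degree 0
    (∀ (φ ψ : Cochain A 0) (χ : Cochain A 1),
      IsML φ → IsML ψ → IsML χ →
      lam φ = φ → bH φ = 0 → opN ψ = φ → χ - lam χ = bP ψ →
      (∃ η : Cochain A 0, IsML η ∧ lam (χ - bH η) = χ - bH η) →
      φ = 0) ∧
    -- injectivity, source degree `n + 1`
    (∀ (n : ℕ) (φ ψ : Cochain A (n + 1)) (χ : Cochain A (n + 2)),
      IsML φ → IsML ψ → IsML χ →
      lam φ = φ → bH φ = 0 → opN ψ = φ → χ - lam χ = bP ψ →
      (∃ η : Cochain A (n + 1), IsML η ∧ lam (χ - bH η) = χ - bH η) →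
      ∃ ξ : Cochain A n, IsML ξ ∧ lam ξ = ξ ∧ bH ξ = φ) := by
  refine ⟨fun n χ' hχ' hcyc => ?_, fun φ ψ χ _ _ _ _ _ hN hχ ⟨η, _, hη⟩ => ?_,
    fun n φ ψ χ _ hψ _ _ _ hN hχ ⟨η, hη_ml, hη⟩ => ?_⟩
  · have hθ : bP (χ' - lam χ') = 0 := by rw [← bH_sub_lam_bH, hcyc, sub_self]
    have hψ_ml : IsML (contraction (χ' - lam χ')) := (hχ'.sub hχ'.lam).contraction
    refine ⟨opN (contraction (χ' - lam χ')), contraction (χ' - lam χ'), 0, χ', hψ_ml.opN, hψ_ml,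
      IsML.zero, hχ', lam_opN _, ?_, rfl, (bP_contraction_of_bP_eq_zero hθ).symm, ?_⟩
    · rw [bH_opN_contraction hθ, opN_sub, opN_lam, sub_self]
    · rw [bH_zero, sub_zero, sub_self, lam_zero]
  · have h := contraction_bP_of_zero (ψ - (η - lam η))
    rw [bP_sub_sub_lam_eq_zero hχ hη] at h
    rw [← hN, ← opN_sub_sub_lam ψ η, ← h, contraction_zero, opN_zero]
  · have h := bP_sub_sub_lam_eq_zero hχ hη
    exact ⟨_, (hψ.sub (hη_ml.sub hη_ml.lam)).contraction.opN, lam_opN _,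
      by rw [bH_opN_contraction h, opN_sub_sub_lam, hN]⟩

end NCG
end
end

section
/- Let A be an associative algebra over ℂ, k ≥ 1, and let φ ∈ C^n(A) be a cyclic n-cocycle, i.e. λφ = φ and bφ = 0. Define φ̃ ∈ C^n(M_k(A)) on the algebra M_k(A) of k×k matrices over A by φ̃(x₀, x₁, …, x_n) = Σ_{i₀,…,i_n} φ((x₀)_{i₀ i₁}, (x₁)_{i₁ i₂}, …, (x_n)_{i_n i₀}), the sum over all indices i₀,…,i_n ∈ {1,…,k}. Then φ̃ is a cyclic n-cocycle on M_k(A): λφ̃ = φ̃ and bφ̃ = 0. (On elementary tensors, φ̃(m₀⊗a₀,…,m_n⊗a_n) = tr(m₀⋯m_n)·φ(a₀,…,a_n).) -/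
noncomputable section
namespace NCG

variable {A : Type} [Ring A] [Algebra ℂ A]

/-- The cochain `φ̃` on `M_k(A)` induced by `φ ∈ Cⁿ(A)`:
`φ̃(x₀,…,xₙ) = ∑_{i₀,…,iₙ} φ((x₀)_{i₀i₁}, (x₁)_{i₁i₂}, …, (xₙ)_{iₙi₀})`. -/
def matExt {A : Type} [Ring A] [Algebra ℂ A] (n k : ℕ) (φ : Cochain A n) :
    Cochain (Matrix (Fin k) (Fin k) A) n :=
  fun x => ∑ idx : Fin (n + 1) → Fin k, φ (fun j => x j (idx j) (idx (j + 1)))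

/-! ### Auxiliary `Fin` arithmetic lemmas -/

lemma val_add_one_of_lt' {m : ℕ} {a : Fin (m + 1)} (h : a.val < m) :
    ((a + 1 : Fin (m + 1)) : ℕ) = a.val + 1 :=
  Fin.val_add_one_of_lt (by rw [Fin.lt_def, Fin.val_last]; omega)

lemma cs_add_one {m : ℕ} (i : Fin m) : (i.castSucc : Fin (m + 1)) + 1 = i.succ := by
  apply Fin.ext
  rw [val_add_one_of_lt' (by simpa using i.isLt)]
  simp

lemma sa_le {n : ℕ} (i j : Fin (n + 1)) (h : j ≤ i) : i.succ.succAbove j = j.castSucc :=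
  Fin.succAbove_of_castSucc_lt _ _ (by
    rw [Fin.lt_def, Fin.coe_castSucc, Fin.val_succ]
    exact Nat.lt_succ_of_le (Fin.le_def.mp h))

lemma sa_gt {n : ℕ} (i j : Fin (n + 1)) (h : i < j) : i.succ.succAbove j = j.succ :=
  Fin.succAbove_of_le_castSucc _ _ (by
    rw [Fin.le_def, Fin.coe_castSucc, Fin.val_succ]
    exact Fin.lt_def.mp h)

lemma sa_add_one {n : ℕ} (i j : Fin (n + 1)) (h : j ≠ i) :
    i.succ.succAbove (j + 1) = i.succ.succAbove j + 1 := by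
  rcases Ne.lt_or_gt h with hlt | hgt
  · have hji : j.val < i.val := Fin.lt_def.mp hlt
    have hjn : j.val < n := by have := i.isLt; omega
    have h1 : ((j + 1 : Fin (n + 1)) : ℕ) = j.val + 1 := val_add_one_of_lt' hjn
    rw [sa_le i j hlt.le, sa_le i (j + 1) (by rw [Fin.le_def, h1]; omega)]
    apply Fin.ext
    rw [Fin.coe_castSucc, h1,
      val_add_one_of_lt' (by rw [Fin.coe_castSucc]; omega), Fin.coe_castSucc]
  · have hij : i.val < j.val := Fin.lt_def.mp hgt
    by_cases hj : j.val = n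
    · have hjl : j = Fin.last n := Fin.ext hj
      subst hjl
      rw [Fin.last_add_one, sa_le i 0 (Fin.zero_le i), sa_gt i (Fin.last n) hgt,
        Fin.succ_last, Fin.last_add_one, Fin.castSucc_zero]
    · have hjn : j.val < n := by have := j.isLt; omega
      have h1 : ((j + 1 : Fin (n + 1)) : ℕ) = j.val + 1 := val_add_one_of_lt' hjn
      rw [sa_gt i j hgt, sa_gt i (j + 1) (by rw [Fin.lt_def, h1]; omega)]
      apply Fin.ext
      rw [Fin.val_succ, h1, val_add_one_of_lt' (by rw [Fin.val_succ]; omega), Fin.val_succ]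

lemma succ_add_one {n : ℕ} (i : Fin (n + 1)) : i.succ + 1 = i.succ.succAbove (i + 1) := by
  by_cases hi : i.val = n
  · have : i = Fin.last n := Fin.ext hi
    subst this
    rw [Fin.last_add_one, sa_le _ 0 (Fin.zero_le _), Fin.castSucc_zero, Fin.succ_last,
      Fin.last_add_one]
  · have hin : i.val < n := by have := i.isLt; omega
    have h1 : ((i + 1 : Fin (n + 1)) : ℕ) = i.val + 1 := val_add_one_of_lt' hin
    rw [sa_gt i (i + 1) (by rw [Fin.lt_def, h1]; omega)]
    apply Fin.ext
    rw [val_add_one_of_lt' (by rw [Fin.val_succ]; omega), Fin.val_succ, Fin.val_succ, h1]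

lemma succ_add_one_of_lt {m : ℕ} {b : Fin (m + 1)} (h : b.val < m) :
    (b.succ : Fin (m + 2)) + 1 = (b + 1).succ := by
  apply Fin.ext
  rw [val_add_one_of_lt' (by rw [Fin.val_succ]; omega), Fin.val_succ, Fin.val_succ,
    val_add_one_of_lt' h]

/-! ### Multilinearity helper -/

lemma sum_update {n k : ℕ} (F : MultilinearMap ℂ (fun _ : Fin (n + 1) => A) ℂ)
    (v : Fin (n + 1) → A) (i : Fin (n + 1)) (g : Fin k → A) (hv : v i = ∑ l, g l) :
    F v = ∑ l, F (Function.update v i (g l)) := by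
  have h2 : ∀ c : A, F (Function.update v i c) = F.toLinearMap v i c := fun c => rfl
  calc F v = F (Function.update v i (v i)) := by rw [Function.update_eq_self]
    _ = F.toLinearMap v i (v i) := h2 _
    _ = ∑ l, F.toLinearMap v i (g l) := by rw [hv, map_sum]
    _ = ∑ l, F (Function.update v i (g l)) := by simp only [h2]

/-! ### The three structural lemmas about `matExt` -/

lemma lam_matExt {n k : ℕ} (φ : Cochain A n) :
    lam (matExt n k φ) = matExt n k (lam φ) := by
  funext x
  show (-1 : ℂ) ^ n * matExt n k φ (fun j => x (j - 1))
      = ∑ idx : Fin (n + 1) → Fin k, lam φ (fun j => x j (idx j) (idx (j + 1)))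
  unfold matExt lam
  rw [Finset.mul_sum]
  refine (Fintype.sum_equiv
    (Equiv.arrowCongr (Equiv.addRight (1 : Fin (n + 1))) (Equiv.refl (Fin k)))
    _ _ fun idx => ?_).symm
  refine congrArg (_ * φ ·) ?_
  funext j
  simp [Equiv.arrowCongr, Equiv.addRight, sub_eq_add_neg]

lemma matExt_face {n k : ℕ} (F : MultilinearMap ℂ (fun _ : Fin (n + 1) => A) ℂ)
    (x : Fin (n + 2) → Matrix (Fin k) (Fin k) A) (i : Fin (n + 1)) :
    matExt n k ⇑F (face x i)
      = ∑ idx : Fin (n + 2) → Fin k,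
          F (face (fun j => x j (idx j) (idx (j + 1))) i) := by
  rw [← Equiv.sum_comp (Fin.insertNthEquiv (fun _ : Fin (n + 2) => Fin k) i.succ)
      (fun idx => F (face (fun j => x j (idx j) (idx (j + 1))) i)), Fintype.sum_prod_type,
      Finset.sum_comm]
  unfold matExt
  refine Finset.sum_congr rfl fun t _ => ?_
  rw [sum_update F _ i (fun l => x i.castSucc (t i) l * x i.succ l (t (i + 1)))
      (by
        show face x i i (t i) (t (i + 1)) = _
        have hfii : face x i i = x i.castSucc * x i.succ := by simp [face]
        rw [hfii, Matrix.mul_apply])]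
  refine Finset.sum_congr rfl fun l _ => ?_
  congr 1
  funext j
  simp only [Fin.insertNthEquiv_apply]
  set idx : Fin (n + 2) → Fin k := Fin.insertNth (α := fun _ : Fin (n + 2) => Fin k) i.succ l t with hidx
  have hsa : ∀ m : Fin (n + 1), idx (i.succ.succAbove m) = t m := fun m => by
    rw [hidx]; exact Fin.insertNth_apply_succAbove (α := fun _ : Fin (n + 2) => Fin k) i.succ l t m
  have hself : idx i.succ = l := by rw [hidx]; exact Fin.insertNth_apply_same (α := fun _ : Fin (n + 2) => Fin k) i.succ l t
  rcases lt_trichotomy j i with h | h | h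
  · rw [Function.update_of_ne (ne_of_lt h)]
    have h1 : face x i j = x j.castSucc := by simp [face, h]
    have h2 : face (fun m => x m (idx m) (idx (m + 1))) i j
        = x j.castSucc (idx j.castSucc) (idx (j.castSucc + 1)) := by
      simp [face, h]
    have e1 : idx j.castSucc = t j := by rw [← sa_le i j h.le]; exact hsa j
    have e2 : idx (j.castSucc + 1) = t (j + 1) := by
      rw [← sa_le i j h.le, ← sa_add_one i j (ne_of_lt h)]; exact hsa (j + 1)
    show face x i j (t j) (t (j + 1)) = _
    rw [h1, h2, e1, e2]
  · subst h
    rw [Function.update_self]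
    have h2 : face (fun m => x m (idx m) (idx (m + 1))) j j
        = x j.castSucc (idx j.castSucc) (idx (j.castSucc + 1))
          * x j.succ (idx j.succ) (idx (j.succ + 1)) := by
      simp [face]
    have e1 : idx j.castSucc = t j := by rw [← sa_le j j le_rfl]; exact hsa j
    have e2 : idx (j.castSucc + 1) = l := by rw [cs_add_one j]; exact hself
    have e3 : idx (j.succ + 1) = t (j + 1) := by rw [succ_add_one j]; exact hsa (j + 1)
    rw [h2, e1, e2, hself, e3]
  · rw [Function.update_of_ne (ne_of_gt h)]
    have hnl : ¬ j < i := not_lt.mpr h.le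
    have hne : j ≠ i := ne_of_gt h
    have h1 : face x i j = x j.succ := by simp [face, hnl, hne]
    have h2 : face (fun m => x m (idx m) (idx (m + 1))) i j
        = x j.succ (idx j.succ) (idx (j.succ + 1)) := by
      simp [face, hnl, hne]
    have e1 : idx j.succ = t j := by rw [← sa_gt i j h]; exact hsa j
    have e2 : idx (j.succ + 1) = t (j + 1) := by
      rw [← sa_gt i j h, ← sa_add_one i j hne]; exact hsa (j + 1)
    show face x i j (t j) (t (j + 1)) = _
    rw [h1, h2, e1, e2]

lemma matExt_cyclicFace {n k : ℕ} (F : MultilinearMap ℂ (fun _ : Fin (n + 1) => A) ℂ)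
    (x : Fin (n + 2) → Matrix (Fin k) (Fin k) A) :
    matExt n k ⇑F (cyclicFace x)
      = ∑ idx : Fin (n + 2) → Fin k,
          F (cyclicFace (fun j => x j (idx j) (idx (j + 1)))) := by
  rw [← Equiv.sum_comp
      ((Equiv.prodCongr (Equiv.refl (Fin k))
        (Equiv.arrowCongr (Equiv.subRight (1 : Fin (n + 1))) (Equiv.refl (Fin k)))).trans
        (Fin.consEquiv fun _ : Fin (n + 2) => Fin k))
      (fun idx => F (cyclicFace (fun j => x j (idx j) (idx (j + 1))))), Fintype.sum_prod_type,
      Finset.sum_comm]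
  unfold matExt
  refine Finset.sum_congr rfl fun t _ => ?_
  rw [sum_update F _ 0 (fun l => x (Fin.last (n + 1)) (t 0) l * x 0 l (t (0 + 1)))
      (by
        show cyclicFace x 0 (t 0) (t (0 + 1)) = _
        have hc0 : cyclicFace x 0 = x (Fin.last (n + 1)) * x 0 := by simp [cyclicFace]
        rw [hc0, Matrix.mul_apply])]
  refine Finset.sum_congr rfl fun l _ => ?_
  congr 1
  funext j
  have he : (((Equiv.prodCongr (Equiv.refl (Fin k))
        (Equiv.arrowCongr (Equiv.subRight (1 : Fin (n + 1))) (Equiv.refl (Fin k)))).trans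
        (Fin.consEquiv fun _ : Fin (n + 2) => Fin k)) (l, t))
      = Fin.cons l (fun m => t (m + 1)) := rfl
  rw [he]
  set idx : Fin (n + 2) → Fin k := Fin.cons l (fun m => t (m + 1)) with hidx
  have h0 : idx 0 = l := rfl
  have hs : ∀ m : Fin (n + 1), idx m.succ = t (m + 1) := fun m => by
    rw [hidx]; exact Fin.cons_succ _ _ _
  rcases eq_or_ne j 0 with rfl | hj
  · rw [Function.update_self]
    have h2 : cyclicFace (fun m => x m (idx m) (idx (m + 1))) 0
        = x (Fin.last (n + 1)) (idx (Fin.last (n + 1))) (idx (Fin.last (n + 1) + 1))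
          * x 0 (idx 0) (idx (0 + 1)) := by
      simp [cyclicFace]
    have c1 : idx (Fin.last (n + 1)) = t 0 := by
      rw [← Fin.succ_last, hs (Fin.last n), Fin.last_add_one]
    have c2 : idx (Fin.last (n + 1) + 1) = l := by rw [Fin.last_add_one]; exact h0
    have c4 : idx ((0 : Fin (n + 2)) + 1) = t (0 + 1) := by
      rw [zero_add, ← Fin.succ_zero_eq_one]; exact hs 0
    rw [h2, c1, c2, h0, c4]
  · obtain ⟨p, rfl⟩ := Fin.exists_succ_eq.mpr hj
    rw [Function.update_of_ne (Fin.succ_ne_zero p)]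
    have h1 : cyclicFace x p.succ = x p.succ.castSucc := by
      simp [cyclicFace, Fin.succ_ne_zero p]
    have h2 : cyclicFace (fun m => x m (idx m) (idx (m + 1))) p.succ
        = x p.succ.castSucc (idx p.succ.castSucc) (idx (p.succ.castSucc + 1)) := by
      simp [cyclicFace, Fin.succ_ne_zero p]
    have d1 : idx p.succ.castSucc = t p.succ := by
      rw [← Fin.succ_castSucc, hs p.castSucc, cs_add_one]
    have d2 : idx (p.succ.castSucc + 1) = t (p.succ + 1) := by
      rw [← Fin.succ_castSucc, succ_add_one_of_lt (by simpa using p.isLt),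
        hs (p.castSucc + 1), cs_add_one]
    show cyclicFace x p.succ (t p.succ) (t (p.succ + 1)) = _
    rw [h1, h2, d1, d2]

lemma bH_matExt {n k : ℕ} (F : MultilinearMap ℂ (fun _ : Fin (n + 1) => A) ℂ) :
    bH (matExt n k ⇑F) = matExt (n + 1) k (bH ⇑F) := by
  funext x
  have hL : bH (matExt n k ⇑F) x
      = ∑ idx : Fin (n + 2) → Fin k,
          ((∑ i : Fin (n + 1),
            (-1 : ℂ) ^ (i : ℕ) * F (face (fun j => x j (idx j) (idx (j + 1))) i))
            + (-1 : ℂ) ^ (n + 1) * F (cyclicFace (fun j => x j (idx j) (idx (j + 1))))) := by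
    show (∑ i : Fin (n + 1), (-1 : ℂ) ^ (i : ℕ) * matExt n k ⇑F (face x i))
        + (-1 : ℂ) ^ (n + 1) * matExt n k ⇑F (cyclicFace x) = _
    rw [matExt_cyclicFace F x, Finset.mul_sum]
    rw [show (∑ i : Fin (n + 1), (-1 : ℂ) ^ (i : ℕ) * matExt n k ⇑F (face x i))
        = ∑ idx : Fin (n + 2) → Fin k, ∑ i : Fin (n + 1),
            (-1 : ℂ) ^ (i : ℕ) * F (face (fun j => x j (idx j) (idx (j + 1))) i) from by
      rw [Finset.sum_comm]
      exact Finset.sum_congr rfl fun i _ => by rw [matExt_face F x i, Finset.mul_sum]]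
    exact Finset.sum_add_distrib.symm
  rw [hL]
  rfl

/-! ### Main theorem -/

/-- If `φ` is a cyclic `n`-cocycle on `A` then `φ̃` is a cyclic `n`-cocycle on the
matrix algebra `M_k(A)`.  (On elementary tensors `φ̃(m₀⊗a₀,…,mₙ⊗aₙ) =
tr(m₀⋯mₙ)·φ(a₀,…,aₙ)`.) -/
theorem matrix_extension_of_cyclic_cocycle_is_cyclic_cocycle
    (A : Type) [Ring A] [Algebra ℂ A] (n k : ℕ) (hk : 1 ≤ k)
    (φ : Cochain A n) (hml : IsML φ) (hcyc : lam φ = φ) (hcocycle : bH φ = 0) :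
    IsML (matExt n k φ) ∧ lam (matExt n k φ) = matExt n k φ ∧ bH (matExt n k φ) = 0 := by
  obtain ⟨F, hF⟩ := hml
  subst hF
  refine ⟨⟨∑ idx : Fin (n + 1) → Fin k,
      F.compLinearMap (fun j => Matrix.entryLinearMap ℂ A (idx j) (idx (j + 1))), ?_⟩, ?_, ?_⟩
  · funext x
    rw [MultilinearMap.sum_apply]
    simp [matExt, MultilinearMap.compLinearMap_apply, Matrix.entryLinearMap_apply]
  · rw [lam_matExt, hcyc]
  · rw [bH_matExt, hcocycle]
    funext x
    simp [matExt]

end NCG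
end
end

section
/- Let f₀, f₁, f₂, f₃ : ℝ² → ℂ be smooth functions that are ℤ²-periodic (f(x+1,y) = f(x,y) = f(x,y+1)), and define φ(f₀, f₁, f₂) = ∫_{[0,1]²} f₀·(∂₁f₁·∂₂f₂ − ∂₂f₁·∂₁f₂), where ∂₁, ∂₂ denote the partial derivatives. Then φ is a cyclic 2-cocycle on the algebra of smooth ℤ²-periodic ℂ-valued functions: (i) φ(f₀f₁, f₂, f₃) − φ(f₀, f₁f₂, f₃) + φ(f₀, f₁, f₂f₃) − φ(f₃f₀, f₁, f₂) = 0 (the Hochschild cocycle condition bφ = 0), and (ii) φ(f₂, f₀, f₁) = φ(f₀, f₁, f₂) (the cyclicity condition λφ = φ). -/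
/-!
The Hochschild identity `bφ = 0` already holds for the integrands: `{g, h} = ∂₁g ∂₂h − ∂₂g ∂₁h`
is a derivation in each entry, and expanding `{f₁f₂, f₃}` and `{f₁, f₂f₃}` by the Leibniz rule
makes the four terms cancel.

For cyclicity, `φ` is antisymmetric in its last two entries, and
`φ(f₀, f₂, f₁) + φ(f₂, f₀, f₁) = ∫ {f₀f₂, f₁}`. By the symmetry of mixed partials,
`{F, G} = ∂₁(F ∂₂G) − ∂₂(F ∂₁G)` is a divergence, so its integral over the unit square vanishes
as soon as `F` and `G` agree on opposite edges of the square, which periodic functions do.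
-/

noncomputable section

/-- First partial derivative of a function of two real variables. -/
def pd1 (f : ℝ → ℝ → ℂ) : ℝ → ℝ → ℂ := fun x y => deriv (fun t => f t y) x

/-- Second partial derivative of a function of two real variables. -/
def pd2 (f : ℝ → ℝ → ℂ) : ℝ → ℝ → ℂ := fun x y => deriv (fun t => f x t) y

/-- The fundamental cyclic 2-cocycle of the 2-torus,
`φ(f₀,f₁,f₂) = ∫_{[0,1]²} f₀ (∂₁f₁ ∂₂f₂ − ∂₂f₁ ∂₁f₂)`, on the algebra of smooth
`ℤ²`-periodic functions on `ℝ²`. -/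
def torPhi (f g h : ℝ → ℝ → ℂ) : ℂ :=
  ∫ x in (0:ℝ)..1, ∫ y in (0:ℝ)..1,
    f x y * (pd1 g x y * pd2 h x y - pd2 g x y * pd1 h x y)

open MeasureTheory Function

section IteratedIntegral

variable {A B : ℝ → ℝ → ℂ} {a b c d : ℝ}

lemma intervalIntegrable_integral_of_continuous (hA : Continuous (uncurry A)) :
    IntervalIntegrable (fun x => ∫ y in c..d, A x y) volume a b :=
  (intervalIntegral.continuous_parametric_intervalIntegral_of_continuous' hA c d).intervalIntegrable
    a b

lemma integral_integral_add_of_continuous (hA : Continuous (uncurry A))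
    (hB : Continuous (uncurry B)) :
    ∫ x in a..b, ∫ y in c..d, (A x y + B x y)
      = (∫ x in a..b, ∫ y in c..d, A x y) + ∫ x in a..b, ∫ y in c..d, B x y := by
  rw [← intervalIntegral.integral_add (intervalIntegrable_integral_of_continuous hA)
    (intervalIntegrable_integral_of_continuous hB)]
  congr with x
  exact intervalIntegral.integral_add ((hA.uncurry_left x).intervalIntegrable c d)
    ((hB.uncurry_left x).intervalIntegrable c d)

lemma integral_integral_sub_of_continuous (hA : Continuous (uncurry A))
    (hB : Continuous (uncurry B)) :
    ∫ x in a..b, ∫ y in c..d, (A x y - B x y)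
      = (∫ x in a..b, ∫ y in c..d, A x y) - ∫ x in a..b, ∫ y in c..d, B x y := by
  rw [← intervalIntegral.integral_sub (intervalIntegrable_integral_of_continuous hA)
    (intervalIntegrable_integral_of_continuous hB)]
  congr with x
  exact intervalIntegral.integral_sub ((hA.uncurry_left x).intervalIntegrable c d)
    ((hB.uncurry_left x).intervalIntegrable c d)

lemma integral_integral_swap_of_continuous (hA : Continuous (uncurry A)) :
    ∫ x in a..b, ∫ y in c..d, A x y = ∫ y in c..d, ∫ x in a..b, A x y :=
  intervalIntegral_intervalIntegral_swap
    ((hA.locallyIntegrable.integrableOn_isCompact (isCompact_uIcc.prod isCompact_uIcc)).mono_set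
      (Set.prod_mono Set.uIoc_subset_uIcc Set.uIoc_subset_uIcc))

end IteratedIntegral

section

variable {f g h k : ℝ → ℝ → ℂ}

lemma hasDerivAt_fst_slice {x y : ℝ} (hf : DifferentiableAt ℝ (uncurry f) (x, y)) :
    HasDerivAt (fun t => f t y) (fderiv ℝ (uncurry f) (x, y) (1, 0)) x :=
  hf.hasFDerivAt.comp_hasDerivAt (f := fun t => (t, y)) x
    ((hasDerivAt_id' x).prodMk (hasDerivAt_const x y))

lemma hasDerivAt_snd_slice {x y : ℝ} (hf : DifferentiableAt ℝ (uncurry f) (x, y)) :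
    HasDerivAt (fun t => f x t) (fderiv ℝ (uncurry f) (x, y) (0, 1)) y :=
  hf.hasFDerivAt.comp_hasDerivAt (f := fun t => (x, t)) y
    ((hasDerivAt_const y x).prodMk (hasDerivAt_id' y))

lemma pd1_eq_fderiv {x y : ℝ} (hf : DifferentiableAt ℝ (uncurry f) (x, y)) :
    pd1 f x y = fderiv ℝ (uncurry f) (x, y) (1, 0) :=
  (hasDerivAt_fst_slice hf).deriv

lemma pd2_eq_fderiv {x y : ℝ} (hf : DifferentiableAt ℝ (uncurry f) (x, y)) :
    pd2 f x y = fderiv ℝ (uncurry f) (x, y) (0, 1) :=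
  (hasDerivAt_snd_slice hf).deriv

lemma uncurry_pd1 (hf : Differentiable ℝ (uncurry f)) :
    uncurry (pd1 f) = fun p => fderiv ℝ (uncurry f) p (1, 0) :=
  funext fun p => pd1_eq_fderiv (hf p)

lemma uncurry_pd2 (hf : Differentiable ℝ (uncurry f)) :
    uncurry (pd2 f) = fun p => fderiv ℝ (uncurry f) p (0, 1) :=
  funext fun p => pd2_eq_fderiv (hf p)

lemma contDiff_pd1 {m n : WithTop ℕ∞} (hf : ContDiff ℝ n (uncurry f)) (hmn : m + 1 ≤ n) :
    ContDiff ℝ m (uncurry (pd1 f)) := by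
  rw [uncurry_pd1 (hf.differentiable (by rintro rfl; simp at hmn))]
  exact (hf.fderiv_right hmn).clm_apply contDiff_const

lemma contDiff_pd2 {m n : WithTop ℕ∞} (hf : ContDiff ℝ n (uncurry f)) (hmn : m + 1 ≤ n) :
    ContDiff ℝ m (uncurry (pd2 f)) := by
  rw [uncurry_pd2 (hf.differentiable (by rintro rfl; simp at hmn))]
  exact (hf.fderiv_right hmn).clm_apply contDiff_const

lemma continuous_pd1 (hf : ContDiff ℝ 1 (uncurry f)) : Continuous (uncurry (pd1 f)) :=
  (contDiff_pd1 hf (m := 0) (by simp)).continuous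

lemma continuous_pd2 (hf : ContDiff ℝ 1 (uncurry f)) : Continuous (uncurry (pd2 f)) :=
  (contDiff_pd2 hf (m := 0) (by simp)).continuous

lemma integral_pd1 (hf : ContDiff ℝ 1 (uncurry f)) (a b y : ℝ) :
    ∫ x in a..b, pd1 f x y = f b y - f a y :=
  intervalIntegral.integral_deriv_eq_sub
    (fun x _ => (hasDerivAt_fst_slice (hf.differentiable one_ne_zero (x, y))).differentiableAt)
    (((continuous_pd1 hf).uncurry_right y).intervalIntegrable a b)

lemma integral_pd2 (hf : ContDiff ℝ 1 (uncurry f)) (a b x : ℝ) :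
    ∫ y in a..b, pd2 f x y = f x b - f x a :=
  intervalIntegral.integral_deriv_eq_sub
    (fun y _ => (hasDerivAt_snd_slice (hf.differentiable one_ne_zero (x, y))).differentiableAt)
    (((continuous_pd2 hf).uncurry_left x).intervalIntegrable a b)

lemma pd1_mul (hf : Differentiable ℝ (uncurry f)) (hg : Differentiable ℝ (uncurry g)) :
    pd1 (f * g) = pd1 f * g + f * pd1 g := by
  ext x y
  have h := ((hasDerivAt_fst_slice (hf (x, y))).mul (hasDerivAt_fst_slice (hg (x, y)))).deriv
  rwa [← pd1_eq_fderiv (hf (x, y)), ← pd1_eq_fderiv (hg (x, y))] at h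

lemma pd2_mul (hf : Differentiable ℝ (uncurry f)) (hg : Differentiable ℝ (uncurry g)) :
    pd2 (f * g) = pd2 f * g + f * pd2 g := by
  ext x y
  have h := ((hasDerivAt_snd_slice (hf (x, y))).mul (hasDerivAt_snd_slice (hg (x, y)))).deriv
  rwa [← pd2_eq_fderiv (hf (x, y)), ← pd2_eq_fderiv (hg (x, y))] at h

lemma pd1_pd2_comm (hf : ContDiff ℝ 2 (uncurry f)) : pd1 (pd2 f) = pd2 (pd1 f) := by
  ext x y
  have hf₁ : Differentiable ℝ (uncurry f) := hf.differentiable two_ne_zero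
  have hf₂ : Differentiable ℝ (fderiv ℝ (uncurry f)) :=
    (hf.fderiv_right (m := 1) le_rfl).differentiable one_ne_zero
  have fderiv_apply (v w : ℝ × ℝ) :
      fderiv ℝ (fun p => fderiv ℝ (uncurry f) p v) (x, y) w
        = fderiv ℝ (fderiv ℝ (uncurry f)) (x, y) w v := by
    simp [fderiv_clm_apply (hf₂ _) (differentiableAt_const v)]
  rw [pd1_eq_fderiv ((contDiff_pd2 hf (m := 1) le_rfl).differentiable one_ne_zero _),
    pd2_eq_fderiv ((contDiff_pd1 hf (m := 1) le_rfl).differentiable one_ne_zero _),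
    uncurry_pd2 hf₁, uncurry_pd1 hf₁, fderiv_apply, fderiv_apply,
    (hf.contDiffAt.isSymmSndFDerivAt (by simp)).eq]

def jacobian (g h : ℝ → ℝ → ℂ) : ℝ → ℝ → ℂ := pd1 g * pd2 h - pd2 g * pd1 h

lemma jacobian_swap (g h : ℝ → ℝ → ℂ) : jacobian h g = -jacobian g h := by
  unfold jacobian; ring

lemma jacobian_mul_left (hf : Differentiable ℝ (uncurry f)) (hg : Differentiable ℝ (uncurry g)) :
    jacobian (f * g) h = f * jacobian g h + g * jacobian f h := by
  unfold jacobian; rw [pd1_mul hf hg, pd2_mul hf hg]; ring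

lemma jacobian_mul_right (hg : Differentiable ℝ (uncurry g)) (hh : Differentiable ℝ (uncurry h)) :
    jacobian f (g * h) = g * jacobian f h + h * jacobian f g := by
  unfold jacobian; rw [pd1_mul hg hh, pd2_mul hg hh]; ring

lemma continuous_jacobian (hg : ContDiff ℝ 1 (uncurry g)) (hh : ContDiff ℝ 1 (uncurry h)) :
    Continuous (uncurry (jacobian g h)) :=
  ((continuous_pd1 hg).mul (continuous_pd2 hh)).sub
    ((continuous_pd2 hg).mul (continuous_pd1 hh))

lemma jacobian_eq_pd1_sub_pd2 (hf : ContDiff ℝ 1 (uncurry f)) (hg : ContDiff ℝ 2 (uncurry g)) :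
    jacobian f g = pd1 (f * pd2 g) - pd2 (f * pd1 g) := by
  have hf₁ := hf.differentiable one_ne_zero
  rw [pd1_mul hf₁ ((contDiff_pd2 hg (m := 1) le_rfl).differentiable one_ne_zero),
    pd2_mul hf₁ ((contDiff_pd1 hg (m := 1) le_rfl).differentiable one_ne_zero), pd1_pd2_comm hg]
  unfold jacobian; ring

def EqOnOppositeEdges (f : ℝ → ℝ → ℂ) : Prop :=
  (∀ y, f 1 y = f 0 y) ∧ ∀ x, f x 1 = f x 0

lemma EqOnOppositeEdges.mul (hf : EqOnOppositeEdges f) (hg : EqOnOppositeEdges g) :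
    EqOnOppositeEdges (f * g) :=
  ⟨fun y => by simp [hf.1 y, hg.1 y], fun x => by simp [hf.2 x, hg.2 x]⟩

lemma EqOnOppositeEdges.of_periodic
    (hf : ∀ x y : ℝ, f (x + 1) y = f x y ∧ f x (y + 1) = f x y) : EqOnOppositeEdges f :=
  ⟨fun y => by simpa using (hf 0 y).1, fun x => by simpa using (hf x 0).2⟩

theorem integral_integral_jacobian_eq_zero (hf : ContDiff ℝ 1 (uncurry f))
    (hg : ContDiff ℝ 2 (uncurry g)) (ef : EqOnOppositeEdges f) (eg : EqOnOppositeEdges g) :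
    ∫ x in (0:ℝ)..1, ∫ y in (0:ℝ)..1, jacobian f g x y = 0 := by
  have h₁ : ContDiff ℝ 1 (uncurry (f * pd2 g)) := hf.mul (contDiff_pd2 hg le_rfl)
  have h₂ : ContDiff ℝ 1 (uncurry (f * pd1 g)) := hf.mul (contDiff_pd1 hg le_rfl)
  simp only [jacobian_eq_pd1_sub_pd2 hf hg, Pi.sub_apply]
  rw [integral_integral_sub_of_continuous (continuous_pd1 h₁) (continuous_pd2 h₂),
    integral_integral_swap_of_continuous (continuous_pd1 h₁)]
  simp only [integral_pd1 h₁, integral_pd2 h₂]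
  simp [pd1, pd2, ef.1, ef.2, eg.1, eg.2]

lemma torPhi_eq (f g h : ℝ → ℝ → ℂ) :
    torPhi f g h = ∫ x in (0:ℝ)..1, ∫ y in (0:ℝ)..1, f x y * jacobian g h x y :=
  rfl

lemma continuous_mul_jacobian (hf : Continuous (uncurry f)) (hg : ContDiff ℝ 1 (uncurry g))
    (hh : ContDiff ℝ 1 (uncurry h)) : Continuous (uncurry (f * jacobian g h)) :=
  hf.mul (continuous_jacobian hg hh)

lemma torPhi_swap_right (f g h : ℝ → ℝ → ℂ) : torPhi f h g = -torPhi f g h := by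
  simp only [torPhi_eq, jacobian_swap g h, Pi.neg_apply, mul_neg, intervalIntegral.integral_neg]

lemma torPhi_mul_middle (hf : Continuous (uncurry f)) (hg : ContDiff ℝ 1 (uncurry g))
    (hh : ContDiff ℝ 1 (uncurry h)) (hk : ContDiff ℝ 1 (uncurry k)) :
    torPhi f (g * h) k = torPhi (f * g) h k + torPhi (f * h) g k := by
  rw [torPhi_eq, jacobian_mul_left (hg.differentiable one_ne_zero) (hh.differentiable one_ne_zero)]
  simp only [Pi.add_apply, Pi.mul_apply, mul_add, ← mul_assoc]
  exact integral_integral_add_of_continuous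
    (continuous_mul_jacobian (hf.mul hg.continuous) hh hk)
    (continuous_mul_jacobian (hf.mul hh.continuous) hg hk)

lemma torPhi_mul_right (hf : Continuous (uncurry f)) (hg : ContDiff ℝ 1 (uncurry g))
    (hh : ContDiff ℝ 1 (uncurry h)) (hk : ContDiff ℝ 1 (uncurry k)) :
    torPhi f g (h * k) = torPhi (f * h) g k + torPhi (f * k) g h := by
  rw [torPhi_eq, jacobian_mul_right (hh.differentiable one_ne_zero) (hk.differentiable one_ne_zero)]
  simp only [Pi.add_apply, Pi.mul_apply, mul_add, ← mul_assoc]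
  exact integral_integral_add_of_continuous
    (continuous_mul_jacobian (hf.mul hh.continuous) hg hk)
    (continuous_mul_jacobian (hf.mul hk.continuous) hg hh)

lemma torPhi_swap_left (hf : ContDiff ℝ 1 (uncurry f)) (hg : ContDiff ℝ 1 (uncurry g))
    (hh : ContDiff ℝ 2 (uncurry h)) (ef : EqOnOppositeEdges f) (eg : EqOnOppositeEdges g)
    (eh : EqOnOppositeEdges h) : torPhi g f h = -torPhi f g h := by
  rw [eq_neg_iff_add_eq_zero, add_comm,
    ← integral_integral_jacobian_eq_zero (f := f * g) (hf.mul hg) hh (ef.mul eg) eh,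
    jacobian_mul_left (hf.differentiable one_ne_zero) (hg.differentiable one_ne_zero)]
  have hh₁ : ContDiff ℝ 1 (uncurry h) := hh.of_le (by simp)
  exact (integral_integral_add_of_continuous (continuous_mul_jacobian hf.continuous hg hh₁)
    (continuous_mul_jacobian hg.continuous hf hh₁)).symm

end

theorem torus_fundamental_class_is_cyclic_two_cocycle_general
    (f₀ f₁ f₂ f₃ : ℝ → ℝ → ℂ)
    (hs₀ : ContDiff ℝ (⊤ : ℕ∞) (fun p : ℝ × ℝ => f₀ p.1 p.2))
    (hs₁ : ContDiff ℝ (⊤ : ℕ∞) (fun p : ℝ × ℝ => f₁ p.1 p.2))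
    (hs₂ : ContDiff ℝ (⊤ : ℕ∞) (fun p : ℝ × ℝ => f₂ p.1 p.2))
    (hs₃ : ContDiff ℝ (⊤ : ℕ∞) (fun p : ℝ × ℝ => f₃ p.1 p.2))
    (hp₀ : ∀ x y : ℝ, f₀ (x + 1) y = f₀ x y ∧ f₀ x (y + 1) = f₀ x y)
    (hp₁ : ∀ x y : ℝ, f₁ (x + 1) y = f₁ x y ∧ f₁ x (y + 1) = f₁ x y)
    (hp₂ : ∀ x y : ℝ, f₂ (x + 1) y = f₂ x y ∧ f₂ x (y + 1) = f₂ x y) :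
    torPhi (f₀ * f₁) f₂ f₃ - torPhi f₀ (f₁ * f₂) f₃ + torPhi f₀ f₁ (f₂ * f₃)
        - torPhi (f₃ * f₀) f₁ f₂ = 0 ∧
    torPhi f₂ f₀ f₁ = torPhi f₀ f₁ f₂ := by
  have smooth {f : ℝ → ℝ → ℂ} (hf : ContDiff ℝ (⊤ : ℕ∞) (uncurry f)) (n : ℕ) :
      ContDiff ℝ n (uncurry f) :=
    contDiff_infty.1 hf n
  constructor
  · rw [torPhi_mul_middle hs₀.continuous (smooth hs₁ 1) (smooth hs₂ 1) (smooth hs₃ 1),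
      torPhi_mul_right hs₀.continuous (smooth hs₁ 1) (smooth hs₂ 1) (smooth hs₃ 1),
      mul_comm f₃ f₀]
    ring
  · rw [torPhi_swap_left (smooth hs₀ 1) (smooth hs₂ 1) (smooth hs₁ 2) (.of_periodic hp₀)
      (.of_periodic hp₂) (.of_periodic hp₁), torPhi_swap_right, neg_neg]

/-- `φ(f₀,f₁,f₂) = ∫_{[0,1]²} f₀(∂₁f₁ ∂₂f₂ − ∂₂f₁ ∂₁f₂)` is a cyclic 2-cocycle
on the algebra of smooth `ℤ²`-periodic functions: `bφ = 0` and `λφ = φ`. -/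
theorem torus_fundamental_class_is_cyclic_two_cocycle
    (f₀ f₁ f₂ f₃ : ℝ → ℝ → ℂ)
    (hs₀ : ContDiff ℝ (⊤ : ℕ∞) (fun p : ℝ × ℝ => f₀ p.1 p.2))
    (hs₁ : ContDiff ℝ (⊤ : ℕ∞) (fun p : ℝ × ℝ => f₁ p.1 p.2))
    (hs₂ : ContDiff ℝ (⊤ : ℕ∞) (fun p : ℝ × ℝ => f₂ p.1 p.2))
    (hs₃ : ContDiff ℝ (⊤ : ℕ∞) (fun p : ℝ × ℝ => f₃ p.1 p.2))
    (hp₀ : ∀ x y : ℝ, f₀ (x + 1) y = f₀ x y ∧ f₀ x (y + 1) = f₀ x y)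
    (hp₁ : ∀ x y : ℝ, f₁ (x + 1) y = f₁ x y ∧ f₁ x (y + 1) = f₁ x y)
    (hp₂ : ∀ x y : ℝ, f₂ (x + 1) y = f₂ x y ∧ f₂ x (y + 1) = f₂ x y)
    (hp₃ : ∀ x y : ℝ, f₃ (x + 1) y = f₃ x y ∧ f₃ x (y + 1) = f₃ x y) :
    torPhi (f₀ * f₁) f₂ f₃ - torPhi f₀ (f₁ * f₂) f₃ + torPhi f₀ f₁ (f₂ * f₃)
        - torPhi (f₃ * f₀) f₁ f₂ = 0 ∧
    torPhi f₂ f₀ f₁ = torPhi f₀ f₁ f₂ :=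
  torus_fundamental_class_is_cyclic_two_cocycle_general f₀ f₁ f₂ f₃ hs₀ hs₁ hs₂ hs₃ hp₀ hp₁ hp₂

end
end

section
/- Let H be a Hopf algebra over ℂ with comultiplication Δ, counit ε and antipode S, let δ : H → ℂ be a character (unital algebra homomorphism), let σ ∈ H be a grouplike element (Δσ = σ⊗σ, ε(σ) = 1), and let A be a unital ℂ-algebra which is a left H-module algebra: A is a left H-module and, writing Δh = h⁽¹⁾⊗h⁽²⁾ (Sweedler notation, summation understood), h·(ab) = (h⁽¹⁾·a)(h⁽²⁾·b) and h·1 = ε(h)·1 for all h ∈ H, a, b ∈ A. Define the δ-twisted antipode S̃_δ : H → H by S̃_δ(h) = δ(h⁽¹⁾) S(h⁽²⁾). Suppose τ : A → ℂ is a linear functional which is a σ-trace, i.e. τ(ab) = τ(b·(σ·a)) for all a, b ∈ A. Then τ is δ-invariant, i.e. τ(h·a) = δ(h)τ(a) for all h ∈ H and a ∈ A, if and only if the integration-by-parts formula holds: τ((h·a)·b) = τ(a·(S̃_δ(h)·b)) for all h ∈ H and a, b ∈ A. -/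
noncomputable section

open TensorProduct

/-- The `δ`-twisted antipode `S̃_δ = δ * S`, i.e. `S̃_δ(h) = δ(h⁽¹⁾)S(h⁽²⁾)`. -/
def twistedAntipode {H : Type} [Ring H] [HopfAlgebra ℂ H] (δ : H →ₐ[ℂ] ℂ) : H →ₗ[ℂ] H :=
  (TensorProduct.lid ℂ H).toLinearMap ∘ₗ
    TensorProduct.map δ.toLinearMap (HopfAlgebra.antipode (R := ℂ)) ∘ₗ
      Coalgebra.comul (R := ℂ)

/-- For `a b : A`, the linear map `H ⊗ H → A` sending `h ⊗ k` to `(h•a)(k•b)`;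
applying it to `comul h` expresses the Sweedler sum `(h⁽¹⁾·a)(h⁽²⁾·b)`. -/
def sweedlerAct {H A : Type} [Ring H] [HopfAlgebra ℂ H] [Ring A] [Algebra ℂ A]
    [Module H A] [IsScalarTower ℂ H A] (a b : A) : H ⊗[ℂ] H →ₗ[ℂ] A :=
  LinearMap.mul' ℂ A ∘ₗ TensorProduct.map
    { toFun := fun h => h • a
      map_add' := fun h k => add_smul h k a
      map_smul' := fun c h => smul_assoc c h a }
    { toFun := fun k => k • b
      map_add' := fun h k => add_smul h k b
      map_smul' := fun c k => smul_assoc c k b }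

/-- The counit of `H` is invariant under the antipode: `ε(S h) = ε h`. -/
lemma counit_antipode' {H : Type} [Ring H] [HopfAlgebra ℂ H] (h : H) :
    Coalgebra.counit (R := ℂ) (HopfAlgebra.antipode (R := ℂ) h) = Coalgebra.counit (R := ℂ) h := by
  have e1 := congrArg (Coalgebra.counit (R := ℂ))
    (HopfAlgebra.mul_antipode_rTensor_comul_apply (R := ℂ) (A := H) h)
  rw [Bialgebra.counit_algebraMap] at e1
  set f : H ⊗[ℂ] ℂ →ₗ[ℂ] ℂ :=
    (Coalgebra.counit (R := ℂ) ∘ₗ HopfAlgebra.antipode (R := ℂ)) ∘ₗ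
      (TensorProduct.rid ℂ H).toLinearMap with hf
  have key : ∀ x : H ⊗[ℂ] H,
      Coalgebra.counit (R := ℂ)
        (LinearMap.mul' ℂ H ((HopfAlgebra.antipode (R := ℂ)).rTensor H x)) =
      f ((Coalgebra.counit (R := ℂ)).lTensor H x) := by
    intro x
    induction x using TensorProduct.induction_on with
    | zero => simp
    | tmul k l => simp [hf, mul_comm]
    | add y z hy hz => simp [map_add, hy, hz]
  rw [key] at e1
  rw [Coalgebra.lTensor_counit_comul] at e1
  simpa [hf] using e1

/-- The counit of the `δ`-twisted antipode is `δ` itself: `ε(S̃_δ h) = δ h`. -/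
lemma counit_twistedAntipode' {H : Type} [Ring H] [HopfAlgebra ℂ H] (δ : H →ₐ[ℂ] ℂ) (h : H) :
    Coalgebra.counit (R := ℂ) (twistedAntipode δ h) = δ h := by
  set M : H ⊗[ℂ] ℂ →ₗ[ℂ] ℂ := δ.toLinearMap ∘ₗ (TensorProduct.rid ℂ H).toLinearMap with hM
  have key : ∀ x : H ⊗[ℂ] H,
      Coalgebra.counit (R := ℂ)
        ((TensorProduct.lid ℂ H)
          (TensorProduct.map δ.toLinearMap (HopfAlgebra.antipode (R := ℂ)) x)) =
      M ((Coalgebra.counit (R := ℂ)).lTensor H x) := by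
    intro x
    induction x using TensorProduct.induction_on with
    | zero => simp
    | tmul k l => simp [hM, counit_antipode', mul_comm]
    | add y z hy hz => simp [map_add, hy, hz]
  have : Coalgebra.counit (R := ℂ) (twistedAntipode δ h) =
      M ((Coalgebra.counit (R := ℂ)).lTensor H (Coalgebra.comul (R := ℂ) h)) := key _
  rw [this, Coalgebra.lTensor_counit_comul]
  simp [hM]

/-- The action on a fixed element, as a `ℂ`-linear map. -/
def actMap {H A : Type} [Ring H] [HopfAlgebra ℂ H] [Ring A] [Algebra ℂ A]
    [Module H A] [IsScalarTower ℂ H A] (a : A) : H →ₗ[ℂ] A where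
  toFun := fun h => h • a
  map_add' := fun h k => add_smul h k a
  map_smul' := fun c h => smul_assoc c h a

set_option synthInstance.maxHeartbeats 1000000 in
/-- Forward direction: `δ`-invariance implies integration by parts. -/
theorem fwd'
    (H : Type) [Ring H] [HopfAlgebra ℂ H]
    (A : Type) [Ring A] [Algebra ℂ A]
    [Module H A] [IsScalarTower ℂ H A] [SMulCommClass H ℂ A]
    (hact_mul : ∀ (h : H) (a b : A),
      h • (a * b) = sweedlerAct a b (Coalgebra.comul (R := ℂ) h))
    (δ : H →ₐ[ℂ] ℂ)
    (τ : A →ₗ[ℂ] ℂ)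
    (hinv : ∀ (h : H) (a : A), τ (h • a) = δ h * τ a)
    (h : H) (a b : A) :
    τ ((h • a) * b) = τ (a * (twistedAntipode δ h • b)) := by
  set S : H →ₗ[ℂ] H := HopfAlgebra.antipode (R := ℂ) with hS
  set T : H ⊗[ℂ] (H ⊗[ℂ] H) →ₗ[ℂ] ℂ :=
    τ ∘ₗ LinearMap.mul' ℂ A ∘ₗ
      TensorProduct.map (actMap a) (actMap b ∘ₗ LinearMap.mul' ℂ H ∘ₗ S.lTensor H) with hT
  have main : ∀ x : H ⊗[ℂ] H,
      τ (a * (actMap b ((TensorProduct.lid ℂ H) (TensorProduct.map δ.toLinearMap S x)))) =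
      T ((TensorProduct.assoc ℂ H H H) ((Coalgebra.comul (R := ℂ)).rTensor H x)) := by
    intro x
    induction x using TensorProduct.induction_on with
    | zero => simp
    | tmul k l =>
      have sub : ∀ y : H ⊗[ℂ] H,
          τ (sweedlerAct a (S l • b) y) = T ((TensorProduct.assoc ℂ H H H) (y ⊗ₜ[ℂ] l)) := by
        intro y
        induction y using TensorProduct.induction_on with
        | zero => simp
        | tmul m n => simp [hT, sweedlerAct, actMap, mul_smul]
        | add y z hy hz => simp only [map_add, add_tmul, hy, hz]
      calc τ (a * (actMap b ((TensorProduct.lid ℂ H)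
            (TensorProduct.map δ.toLinearMap S (k ⊗ₜ[ℂ] l)))))
          = τ (a * (δ k • (S l • b))) := by simp [actMap, smul_assoc]
        _ = δ k * τ (a * (S l • b)) := by rw [mul_smul_comm, map_smul, smul_eq_mul]
        _ = τ (k • (a * (S l • b))) := (hinv k _).symm
        _ = τ (sweedlerAct a (S l • b) (Coalgebra.comul (R := ℂ) k)) := by rw [hact_mul]
        _ = T ((TensorProduct.assoc ℂ H H H) ((Coalgebra.comul (R := ℂ) k) ⊗ₜ[ℂ] l)) := sub _
        _ = T ((TensorProduct.assoc ℂ H H H)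
            ((Coalgebra.comul (R := ℂ)).rTensor H (k ⊗ₜ[ℂ] l))) := by
            rw [LinearMap.rTensor_tmul]
    | add y z hy hz => simp only [map_add, mul_add, hy, hz]
  set W : H ⊗[ℂ] ℂ →ₗ[ℂ] ℂ :=
    τ ∘ₗ LinearMap.mulRight ℂ b ∘ₗ actMap a ∘ₗ (TensorProduct.rid ℂ H).toLinearMap with hW
  have step4 : ∀ x : H ⊗[ℂ] H,
      T ((Coalgebra.comul (R := ℂ)).lTensor H x) =
      W ((Coalgebra.counit (R := ℂ)).lTensor H x) := by
    intro x
    induction x using TensorProduct.induction_on with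
    | zero => simp
    | tmul k l =>
      have h1 : LinearMap.mul' ℂ H (S.lTensor H (Coalgebra.comul (R := ℂ) l)) =
          algebraMap ℂ H (Coalgebra.counit (R := ℂ) l) :=
        HopfAlgebra.mul_antipode_lTensor_comul_apply (R := ℂ) l
      have h2 : (algebraMap ℂ H (Coalgebra.counit (R := ℂ) l)) • b =
          Coalgebra.counit (R := ℂ) l • b := by
        rw [Algebra.algebraMap_eq_smul_one, smul_assoc, one_smul]
      simp only [hT, hW, LinearMap.lTensor_tmul, LinearMap.coe_comp, Function.comp_apply,
        TensorProduct.map_tmul, LinearMap.mul'_apply, h1, LinearMap.mulRight_apply,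
        LinearEquiv.coe_coe, TensorProduct.rid_tmul]
      simp [actMap, h2, mul_smul_comm, smul_mul_assoc]
    | add y z hy hz => simp only [map_add, hy, hz]
  have cz := Coalgebra.coassoc_apply (R := ℂ) h
  calc τ ((h • a) * b)
      = W (h ⊗ₜ[ℂ] (1 : ℂ)) := by simp [hW, actMap]
    _ = W ((Coalgebra.counit (R := ℂ)).lTensor H (Coalgebra.comul (R := ℂ) h)) := by
        rw [Coalgebra.lTensor_counit_comul]
    _ = T ((Coalgebra.comul (R := ℂ)).lTensor H (Coalgebra.comul (R := ℂ) h)) := (step4 _).symm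
    _ = T ((TensorProduct.assoc ℂ H H H)
        ((Coalgebra.comul (R := ℂ)).rTensor H (Coalgebra.comul (R := ℂ) h))) := by rw [cz]
    _ = τ (a * (twistedAntipode δ h • b)) := by
        rw [← main]
        rfl

/-- A `σ`-trace `τ` on a left `H`-module algebra `A` is `δ`-invariant if and
only if the integration-by-parts formula
`τ((h·a)b) = τ(a (S̃_δ(h)·b))` holds. -/
theorem delta_invariance_iff_integration_by_parts
    (H : Type) [Ring H] [HopfAlgebra ℂ H]
    (A : Type) [Ring A] [Algebra ℂ A]
    [Module H A] [IsScalarTower ℂ H A] [SMulCommClass H ℂ A]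
    -- `A` is a left `H`-module algebra: `h·(ab) = (h⁽¹⁾·a)(h⁽²⁾·b)`, `h·1 = ε(h)1`
    (hact_mul : ∀ (h : H) (a b : A),
      h • (a * b) = sweedlerAct a b (Coalgebra.comul (R := ℂ) h))
    (hact_one : ∀ h : H, h • (1 : A) = Coalgebra.counit (R := ℂ) h • (1 : A))
    -- a character `δ` of `H` and a grouplike element `σ ∈ H`
    (δ : H →ₐ[ℂ] ℂ) (σ : H)
    (hσ_comul : Coalgebra.comul (R := ℂ) σ = σ ⊗ₜ[ℂ] σ)
    (hσ_counit : Coalgebra.counit (R := ℂ) σ = 1)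
    -- a `σ`-trace `τ : A → ℂ`
    (τ : A →ₗ[ℂ] ℂ) (htrace : ∀ a b : A, τ (a * b) = τ (b * (σ • a))) :
    (∀ (h : H) (a : A), τ (h • a) = δ h * τ a) ↔
      (∀ (h : H) (a b : A), τ ((h • a) * b) = τ (a * (twistedAntipode δ h • b))) := by
  constructor
  · intro hinv h a b
    exact fwd' H A hact_mul δ τ hinv h a b
  · intro hibp h a
    have e1 : τ (h • a) = τ (a * (twistedAntipode δ h • (1 : A))) := by
      rw [← hibp h a 1, mul_one]
    rw [e1, hact_one, counit_twistedAntipode' δ h, mul_smul_comm, map_smul, smul_eq_mul,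
      mul_one]

end
end

section
/- Let 𝓗 = L² of the circle (e.g. L²(ℝ/ℤ, ℂ) with Haar measure), with orthonormal Hilbert basis (e_n)_{n∈ℤ}, e_n(x) = e^{2πinx}. Let F be the bounded self-adjoint operator on 𝓗 determined by F(e_n) = e_n for n ≥ 0 and F(e_n) = −e_n for n < 0 (so F² = I). For a continuous function f on the circle, let M_f denote the bounded multiplication operator (M_f ξ)(x) = f(x)ξ(x) on 𝓗. Then for every continuous f, the commutator [F, M_f] = F∘M_f − M_f∘F is a compact operator on 𝓗; hence (𝓗, F) is an odd Fredholm module over C(S¹). -/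
/-!
`F` is diagonal in the Fourier basis with eigenvalues `±1`, hence a self-adjoint involution.
Since `f ↦ [F, M f]` is a bounded linear map into the operators and compact operators form a
closed subspace, it suffices to treat the characters `eₖ`, whose span is dense in `C(S¹)`.
But `[F, M eₖ] eₘ = (sgn (k + m) - sgn m) e_{k+m}` vanishes unless `0` lies between `m` and
`k + m`, so `[F, M eₖ]` has finite rank.
-/
noncomputable section

open MeasureTheory AddCircle

instance : Fact (0 < (1 : ℝ)) := ⟨one_pos⟩

open scoped InnerProductSpace

namespace HilbertBasis

variable {ι 𝕜 E : Type*} [RCLike 𝕜] [NormedAddCommGroup E] [InnerProductSpace 𝕜 E]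
  (b : HilbertBasis ι 𝕜 E)

theorem ext_inner {x y : E} (h : ∀ i, ⟪b i, x⟫_𝕜 = ⟪b i, y⟫_𝕜) : x = y :=
  b.repr.injective <| lp.ext <| funext fun i => by
    simp only [b.repr_apply_apply, h]

theorem ext_continuousLinearMap {F : Type*} [TopologicalSpace F] [T2Space F] [AddCommMonoid F]
    [Module 𝕜 F] {A B : E →L[𝕜] F} (h : ∀ i, A (b i) = B (b i)) : A = B :=
  ContinuousLinearMap.ext_on (Submodule.dense_iff_topologicalClosure_eq_top.mpr b.dense_span)
    (Set.forall_mem_range.mpr h)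

theorem isCompactOperator_of_apply_eq_zero {F : Type*} [NormedAddCommGroup F] [NormedSpace 𝕜 F]
    {T : E →L[𝕜] F} (s : Finset ι) (hT : ∀ i ∉ s, T (b i) = 0) : IsCompactOperator T := by
  have hsum : T = ∑ i ∈ s, (ContinuousLinearMap.toSpanSingleton 𝕜 (T (b i))).comp
      (innerSL 𝕜 (b i)) := by
    refine b.ext_continuousLinearMap fun j => ?_
    rw [sum_apply, Finset.sum_eq_single j
      (fun i _ hij => by simp [b.orthonormal.inner_eq_zero hij])
      (fun hj => by simp [hT j hj])]
    simp [inner_self_eq_norm_sq_to_K, b.orthonormal.norm_eq_one]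
  rw [hsum]
  refine (compactOperator (RingHom.id 𝕜) E F).sum_mem fun i _ => ?_
  exact (isCompactOperator_of_locallyCompactSpace_rng
    (ContinuousLinearMap.toSpanSingleton 𝕜 (T (b i)))).comp_clm (innerSL 𝕜 (b i))

variable [CompleteSpace E]

theorem isSelfAdjoint_of_apply_eq_smul {T : E →L[𝕜] E} (ε : ι → ℝ)
    (hT : ∀ i, T (b i) = (ε i : 𝕜) • b i) : IsSelfAdjoint T := by
  refine b.ext_continuousLinearMap fun i => b.ext_inner fun j => ?_
  rw [ContinuousLinearMap.star_eq_adjoint, ContinuousLinearMap.adjoint_inner_right, hT, hT,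
    inner_smul_left, inner_smul_right, RCLike.conj_ofReal]
  obtain rfl | hij := eq_or_ne j i
  · rfl
  · simp [b.orthonormal.inner_eq_zero hij]

end HilbertBasis

namespace ContinuousLinearMap

theorem isCompactOperator_apply_of_dense_span {𝕜 X E F : Type*} [NontriviallyNormedField 𝕜]
    [NormedAddCommGroup X] [NormedSpace 𝕜 X] [NormedAddCommGroup E] [NormedSpace 𝕜 E]
    [NormedAddCommGroup F] [NormedSpace 𝕜 F] [CompleteSpace F]
    (Φ : X →L[𝕜] E →L[𝕜] F) {s : Set X} (hs : (Submodule.span 𝕜 s).topologicalClosure = ⊤)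
    (hΦ : ∀ x ∈ s, IsCompactOperator (Φ x)) (x : X) : IsCompactOperator (Φ x) := by
  let C := (compactOperator (RingHom.id 𝕜) E F).comap Φ.toLinearMap
  have hC : IsClosed (C : Set X) := isClosed_setOfPred_isCompactOperator.preimage Φ.continuous
  have : ⊤ ≤ C := hs ▸ Submodule.topologicalClosure_minimal _ (Submodule.span_le.mpr hΦ) hC
  exact this trivial

def commutatorL (𝕜 : Type*) {A : Type*} [NontriviallyNormedField 𝕜] [NormedRing A]
    [NormedAlgebra 𝕜 A] (a : A) : A →L[𝕜] A :=
  mul 𝕜 A a - (mul 𝕜 A).flip a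

@[simp]
theorem commutatorL_apply {𝕜 A : Type*} [NontriviallyNormedField 𝕜] [NormedRing A]
    [NormedAlgebra 𝕜 A] (a b : A) : commutatorL 𝕜 a b = a * b - b * a :=
  rfl

end ContinuousLinearMap

namespace MeasureTheory

variable {α 𝕜 : Type*} [TopologicalSpace α] [MeasurableSpace α] [NontriviallyNormedField 𝕜]
  {p : ENNReal} [Fact (1 ≤ p)]

def IsMultiplicationRep (μ : Measure α) (M : C(α, 𝕜) → Lp 𝕜 p μ →L[𝕜] Lp 𝕜 p μ) : Prop :=
  ∀ f ξ, (M f ξ : α → 𝕜) =ᵐ[μ] fun x => f x * ξ x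

namespace IsMultiplicationRep

variable {μ : Measure α} {M : C(α, 𝕜) → Lp 𝕜 p μ →L[𝕜] Lp 𝕜 p μ} (hM : IsMultiplicationRep μ M)
include hM

theorem map_add (f g : C(α, 𝕜)) : M (f + g) = M f + M g := by
  ext ξ
  filter_upwards [hM (f + g) ξ, hM f ξ, hM g ξ, Lp.coeFn_add (M f ξ) (M g ξ)] with x h h₁ h₂ h₃
  simp only [add_apply, h, h₃, Pi.add_apply, h₁, h₂, ContinuousMap.add_apply, add_mul]

theorem map_smul (c : 𝕜) (f : C(α, 𝕜)) : M (c • f) = c • M f := by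
  ext ξ
  filter_upwards [hM (c • f) ξ, hM f ξ, Lp.coeFn_smul c (M f ξ)] with x h h₁ h₂
  simp only [smul_apply, h, h₂, Pi.smul_apply, h₁, ContinuousMap.smul_apply,
    smul_eq_mul, mul_assoc]

variable [CompactSpace α]

theorem norm_apply_le (f : C(α, 𝕜)) (ξ : Lp 𝕜 p μ) : ‖M f ξ‖ ≤ ‖f‖ * ‖ξ‖ :=
  Lp.norm_le_mul_norm_of_ae_le_mul <| by
    filter_upwards [hM f ξ] with x hx
    rw [hx, norm_mul]
    gcongr
    exact f.norm_coe_le_norm x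

def toContinuousLinearMap : C(α, 𝕜) →L[𝕜] Lp 𝕜 p μ →L[𝕜] Lp 𝕜 p μ :=
  LinearMap.mkContinuous ⟨⟨M, hM.map_add⟩, hM.map_smul⟩ 1 fun f => by
    rw [one_mul]
    exact (M f).opNorm_le_bound (norm_nonneg f) (hM.norm_apply_le f)

theorem toContinuousLinearMap_apply (f : C(α, 𝕜)) : hM.toContinuousLinearMap f = M f := rfl

end IsMultiplicationRep

theorem IsMultiplicationRep.apply_fourier_fourierBasis {T : ℝ} [Fact (0 < T)]
    {M : C(AddCircle T, ℂ) → Lp ℂ 2 (haarAddCircle (T := T)) →L[ℂ] Lp ℂ 2 (haarAddCircle (T := T))}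
    (hM : IsMultiplicationRep haarAddCircle M) (k n : ℤ) :
    M (fourier k) (fourierBasis n) = fourierBasis (k + n) := by
  simp only [coe_fourierBasis]
  ext1
  filter_upwards [hM (fourier k) (fourierLp 2 n), coeFn_fourierLp 2 n,
    coeFn_fourierLp (T := T) 2 (k + n)] with x h hn hkn
  rw [h, hn, hkn, fourier_add]

end MeasureTheory

/-- Let `𝓗 = L²` of the circle with its Fourier Hilbert basis `(eₙ)ₙ∈ℤ`,
`eₙ(x) = e^{2πinx}`, let `F` be the bounded operator with `F eₙ = eₙ` for
`n ≥ 0` and `F eₙ = -eₙ` for `n < 0`, and let `M f` be multiplication by a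
continuous function `f` on the circle.  Then for every continuous `f` the
commutator `[F, M f] = F ∘ M f - M f ∘ F` is a compact operator; hence
`(𝓗, F)` is an odd Fredholm module over `C(S¹)`. -/
theorem commutator_sign_operator_multiplication_isCompactOperator
    (F : Lp ℂ 2 (haarAddCircle (T := 1)) →L[ℂ] Lp ℂ 2 (haarAddCircle (T := 1)))
    (hF : ∀ n : ℤ, F (fourierBasis n) =
      if 0 ≤ n then fourierBasis n else -fourierBasis n)
    (M : C(AddCircle (1 : ℝ), ℂ) →
      (Lp ℂ 2 (haarAddCircle (T := 1)) →L[ℂ] Lp ℂ 2 (haarAddCircle (T := 1))))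
    (hM : ∀ (f : C(AddCircle (1 : ℝ), ℂ)) (ξ : Lp ℂ 2 (haarAddCircle (T := 1))),
      (M f ξ : AddCircle (1 : ℝ) → ℂ) =ᵐ[haarAddCircle (T := 1)]
        fun x => f x * ξ x) :
    IsSelfAdjoint F ∧ F ∘L F = 1 ∧
      ∀ f : C(AddCircle (1 : ℝ), ℂ),
        IsCompactOperator (fun ξ : Lp ℂ 2 (haarAddCircle (T := 1)) =>
          F (M f ξ) - M f (F ξ)) := by
  have hMul : IsMultiplicationRep haarAddCircle M := hM
  have hSelfAdjoint : IsSelfAdjoint F :=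
    fourierBasis.isSelfAdjoint_of_apply_eq_smul (fun n => if 0 ≤ n then 1 else -1) fun n => by
      rw [hF]; split_ifs <;> simp
  have hInvolution : F ∘L F = 1 := fourierBasis.ext_continuousLinearMap fun n => by
    by_cases hn : 0 ≤ n <;> simp only [ContinuousLinearMap.comp_apply, hF, hn, ite_true,
      ite_false, map_neg, neg_neg, one_apply_eq_self]
  refine ⟨hSelfAdjoint, hInvolution, fun f => ?_⟩
  refine ((ContinuousLinearMap.commutatorL ℂ F).comp hMul.toContinuousLinearMap
    ).isCompactOperator_apply_of_dense_span span_fourier_closure_eq_top ?_ f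
  rintro _ ⟨k, rfl⟩
  refine fourierBasis.isCompactOperator_of_apply_eq_zero (Finset.Ico (min 0 (-k)) (max 0 (-k)))
    fun m hm => ?_
  have hsign : 0 ≤ k + m ↔ 0 ≤ m := by
    rw [Finset.mem_Ico] at hm
    omega
  simp only [ContinuousLinearMap.comp_apply, hMul.toContinuousLinearMap_apply,
    ContinuousLinearMap.commutatorL_apply, sub_apply, ContinuousLinearMap.mul_def]
  rw [hMul.apply_fourier_fourierBasis, hF, hF, if_congr hsign rfl rfl]
  split_ifs <;> simp only [map_neg, hMul.apply_fourier_fourierBasis, sub_self]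
end
end
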